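/- arXiv:1805.08584 — 2 statements merged into one kernel-verified Lean document; each statement's English description precedes it below -/
import Mathlib

section
/- Let E be a linear regular tree expression and P_E = (Σ, Pos(E), Root(E), δ) its Bottom-Up Position automaton. For every tree t ∈ T_Σ and symbol f ∈ Pos(E), f ∈ Δ(t) if and only if root(t) = f and for every subtree s = g(t_1,…,t_n) of t and every i ≤ n, (g, i) ∈ Father(E, root(t_i)). -/
set_option autoImplicit false

/-- Trees over a ranked alphabet: a node is a symbol together with `rank f` children. -/
inductive RTree (σ : Type) (rank : σ → ℕ) : Type where
  | node : (f : σ) → (Fin (rank f) → RTree σ rank) → RTree σ rank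

namespace RTree

variable {σ σ' : Type} {rank : σ → ℕ} {rank' : σ' → ℕ}

/-- Root symbol of a tree. -/
def root : RTree σ rank → σ
  | node f _ => f

/-- `Sub s t`: `s` is a subtree of `t` (including `t` itself). -/
inductive Sub : RTree σ rank → RTree σ rank → Prop where
  | refl (t : RTree σ rank) : Sub t t
  | child {s : RTree σ rank} {f : σ} {ts : Fin (rank f) → RTree σ rank} (i : Fin (rank f)) :
      Sub s (ts i) → Sub s (node f ts)

/-- `father t f` : the set of pairs `(g, i)` such that some subtree of `t` has root `g`
whose `i`-th child has root `f` (indices are `0`-based). -/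
def father (t : RTree σ rank) (f : σ) : Set (σ × ℕ) :=
  {p | ∃ ss : Fin (rank p.1) → RTree σ rank, Sub (node p.1 ss) t ∧
        ∃ h : p.2 < rank p.1, root (ss ⟨p.2, h⟩) = f}

/-- Image of a tree under an alphabetical morphism (rank-preserving symbol map). -/
def map (φ : σ → σ') (hr : ∀ f, rank' (φ f) = rank f) : RTree σ rank → RTree σ' rank'
  | node f ts => node (φ f) (fun i => map φ hr (ts (Fin.cast (hr f) i)))

end RTree

/-- `Subst c L t t'` : `t'` is obtained from `t` by substituting every occurrence of the
(nullary) symbol `c` by some (possibly different) trees of `L`. -/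
inductive Subst {σ : Type} {rank : σ → ℕ} (c : σ) (L : Set (RTree σ rank)) :
    RTree σ rank → RTree σ rank → Prop where
  | base (ts : Fin (rank c) → RTree σ rank) {t' : RTree σ rank} :
      t' ∈ L → Subst c L (.node c ts) t'
  | node {f : σ} {ts ts' : Fin (rank f) → RTree σ rank} :
      f ≠ c → (∀ i, Subst c L (ts i) (ts' i)) → Subst c L (.node f ts) (.node f ts')

/-- `L' ·_c L`. -/
def substL {σ : Type} {rank : σ → ℕ} (L' : Set (RTree σ rank)) (c : σ)
    (L : Set (RTree σ rank)) : Set (RTree σ rank) :=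
  {t' | ∃ t ∈ L', Subst c L t t'}

/-- `L^{c,n}`. -/
def substPow {σ : Type} {rank : σ → ℕ} (L : Set (RTree σ rank)) (c : σ) :
    ℕ → Set (RTree σ rank)
  | 0 => {t | ∃ ts, t = RTree.node c ts}
  | n + 1 => substL L c (substPow L c n)

/-- `L^{*_c}`. -/
def substStar {σ : Type} {rank : σ → ℕ} (L : Set (RTree σ rank)) (c : σ) :
    Set (RTree σ rank) :=
  ⋃ n, substPow L c n

/-- Regular tree expressions. -/
inductive RExp (σ : Type) (rank : σ → ℕ) : Type where
  | symb (f : σ) (args : Fin (rank f) → RExp σ rank)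
  | plus (E1 E2 : RExp σ rank)
  | prod (c : σ) (E1 E2 : RExp σ rank)
  | star (c : σ) (E : RExp σ rank)

namespace RExp

variable {σ σ' : Type} {rank : σ → ℕ}

/-- Language denoted by a regular tree expression. -/
def lang : RExp σ rank → Set (RTree σ rank)
  | symb f args => {t | ∃ ts, (∀ i, ts i ∈ (args i).lang) ∧ t = RTree.node f ts}
  | plus E1 E2 => E1.lang ∪ E2.lang
  | prod c E1 E2 => substL E1.lang c E2.lang
  | star c E => substStar E.lang c

/-- Number of occurrences of a symbol in an expression. -/
def occ [DecidableEq σ] : RExp σ rank → σ → ℕ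
  | symb f args, g => (if f = g then 1 else 0) + ∑ i, (args i).occ g
  | plus E1 E2, g => E1.occ g + E2.occ g
  | prod _ E1 E2, g => E1.occ g + E2.occ g
  | star c E, g => (if c = g then 1 else 0) + E.occ g

/-- Well-formedness: products and stars use nullary symbols, and `E1 ·_c E2`
only appears when `c` occurs in `E1`. -/
def wf [DecidableEq σ] : RExp σ rank → Prop
  | symb _ args => ∀ i, (args i).wf
  | plus E1 E2 => E1.wf ∧ E2.wf
  | prod c E1 E2 => rank c = 0 ∧ 1 ≤ E1.occ c ∧ E1.wf ∧ E2.wf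
  | star c E => rank c = 0 ∧ E.wf

/-- A linear expression: well-formed and every symbol of positive rank occurs at most once. -/
def Linear [DecidableEq σ] (E : RExp σ rank) : Prop :=
  E.wf ∧ ∀ g : σ, 1 ≤ rank g → E.occ g ≤ 1

/-- Set of positions (symbols occurring in the expression). -/
def Pos [DecidableEq σ] (E : RExp σ rank) : Set σ :=
  {g | 1 ≤ E.occ g}

/-- `Root E` : roots of the trees of `L(E)`. -/
def Root (E : RExp σ rank) : Set σ :=
  {g | ∃ t ∈ E.lang, RTree.root t = g}

/-- `Father E f` : union of `father t f` over trees `t ∈ L(E)`. -/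
def Father (E : RExp σ rank) (f : σ) : Set (σ × ℕ) :=
  ⋃ t ∈ E.lang, RTree.father t f

end RExp

/-- Rank function of the alphabet extended with a fresh unary symbol `$` (encoded `none`). -/
def dollarRank {σ : Type} (rank : σ → ℕ) : Option σ → ℕ :=
  fun o => o.elim 1 rank

/-- Embedding of an expression into the `$`-extended alphabet. -/
def RExp.emb {σ : Type} {rank : σ → ℕ} : RExp σ rank → RExp (Option σ) (dollarRank rank)
  | .symb f args => .symb (some f) (fun i => (args i).emb)
  | .plus E1 E2 => .plus E1.emb E2.emb
  | .prod c E1 E2 => .prod (some c) E1.emb E2.emb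
  | .star c E => .star (some c) E.emb

/-- `$(E)` : the expression `E` with the fresh unary symbol `$` on top. -/
def RExp.dollar {σ : Type} {rank : σ → ℕ} (E : RExp σ rank) :
    RExp (Option σ) (dollarRank rank) :=
  .symb none (fun _ => E.emb)

/-- `Father($(E), f)` for a symbol `f` of the original alphabet. -/
def RExp.FatherD {σ : Type} {rank : σ → ℕ} (E : RExp σ rank) (f : σ) :
    Set (Option σ × ℕ) :=
  E.dollar.Father (some f)

/-- A (Bottom-Up) tree automaton with state type `Q`: final states and a transition relation. -/
structure TA (σ : Type) (rank : σ → ℕ) (Q : Type) where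
  final : Set Q
  delta : (f : σ) → (Fin (rank f) → Q) → Set Q

namespace TA

variable {σ σ' : Type} {rank : σ → ℕ} {rank' : σ' → ℕ} {Q Q' : Type}

/-- Extension of the transition function to trees. -/
def Delta (A : TA σ rank Q) : RTree σ rank → Set Q
  | .node f ts => {q | ∃ qs, (∀ i, qs i ∈ A.Delta (ts i)) ∧ q ∈ A.delta f qs}

/-- Language recognized by a tree automaton. -/
def lang (A : TA σ rank Q) : Set (RTree σ rank) :=
  {t | ∃ q ∈ A.Delta t, q ∈ A.final}

/-- Image of an automaton under an alphabetical morphism. -/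
def image (φs : σ → σ') (hr : ∀ f, rank' (φs f) = rank f) (A : TA σ rank Q) :
    TA σ' rank' Q where
  final := A.final
  delta g qs := {q | ∃ f, ∃ h : φs f = g,
    q ∈ A.delta f (fun i => qs (Fin.cast (congrArg rank' h) (Fin.cast (hr f).symm i)))}

/-- Quotient of an automaton by an equivalence on states. -/
def quot (A : TA σ rank Q) (s : Setoid Q) : TA σ rank (Quotient s) where
  final := {x | ∃ q, Quotient.mk s q = x ∧ q ∈ A.final}
  delta f xs := {x | ∃ (qs : Fin (rank f) → Q) (q : Q),
    (∀ i, Quotient.mk s (qs i) = xs i) ∧ q ∈ A.delta f qs ∧ Quotient.mk s q = x}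

end TA

/-- The Bottom-Up Position automaton of an expression `E` (states are symbols). -/
def posTA {σ : Type} {rank : σ → ℕ} (E : RExp σ rank) : TA σ rank σ where
  final := E.Root
  delta g qs := {q | q = g ∧ ∀ i : Fin (rank g), (g, (i : ℕ)) ∈ E.Father (qs i)}

/-- Extension of an equivalence relation to subsets of size at most one
(nonempty sets are related iff they contain related elements; `∅ ∼ ∅` only). -/
def SetEquiv {Q : Type} (r : Q → Q → Prop) (S S' : Set Q) : Prop :=
  (∀ q ∈ S, ∃ q' ∈ S', r q q') ∧ (∀ q' ∈ S', ∃ q ∈ S, r q q')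

/-- A compressed tree automaton: transitions have sets of states as origins. -/
structure CTA (σ : Type) (rank : σ → ℕ) (Q : Type) where
  final : Set Q
  delta : (f : σ) → (Fin (rank f) → Set Q) → Set Q

namespace CTA

variable {σ σ' : Type} {rank : σ → ℕ} {rank' : σ' → ℕ} {Q : Type}

/-- Restriction of compressed transitions to single states. -/
def deltaS (A : CTA σ rank Q) (f : σ) (qs : Fin (rank f) → Q) : Set Q :=
  {q | ∃ Qs : Fin (rank f) → Set Q, q ∈ A.delta f Qs ∧ ∀ i, qs i ∈ Qs i}

/-- Extension of compressed transitions to trees. -/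
def Delta (A : CTA σ rank Q) : RTree σ rank → Set Q
  | .node f ts => {q | ∃ Qs : Fin (rank f) → Set Q,
      q ∈ A.delta f Qs ∧ ∀ i, (A.Delta (ts i) ∩ Qs i).Nonempty}

/-- Language recognized by a compressed tree automaton. -/
def lang (A : CTA σ rank Q) : Set (RTree σ rank) :=
  {t | ∃ q ∈ A.Delta t, q ∈ A.final}

/-- Image of a compressed automaton under an alphabetical morphism. -/
def image (φs : σ → σ') (hr : ∀ f, rank' (φs f) = rank f) (A : CTA σ rank Q) :
    CTA σ' rank' Q where
  final := A.final
  delta g Qs := {q | ∃ f, ∃ h : φs f = g,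
    q ∈ A.delta f (fun i => Qs (Fin.cast (congrArg rank' h) (Fin.cast (hr f).symm i)))}

/-- Quotient of a compressed automaton by an equivalence on states. -/
def quot (A : CTA σ rank Q) (s : Setoid Q) : CTA σ rank (Quotient s) where
  final := {x | ∃ q, Quotient.mk s q = x ∧ q ∈ A.final}
  delta f Xs := {x | ∃ (qs : Fin (rank f) → Q) (q : Q),
    q ∈ A.deltaS f qs ∧ (∀ i, Quotient.mk s (qs i) ∈ Xs i) ∧ Quotient.mk s q = x}

end CTA

/-- The compressed Bottom-Up Position automaton of an expression `E`. -/
def cPosTA {σ : Type} {rank : σ → ℕ} (E : RExp σ rank) : CTA σ rank σ where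
  final := E.Root
  delta f Qs := {q | q = f ∧ ∀ i : Fin (rank f), Qs i = {g | (f, (i : ℕ)) ∈ E.Father g}}

/-- The state type of the Father automaton: the sets `Father($(E), f)`. -/
def FQ {σ : Type} {rank : σ → ℕ} (E : RExp σ rank) : Type :=
  {q : Set (Option σ × ℕ) // ∃ f : σ, q = E.FatherD f}

/-- The Father automaton of an expression `E`. -/
def fatherTA {σ : Type} {rank : σ → ℕ} (E : RExp σ rank) : TA σ rank (FQ E) where
  final := {q | ((none : Option σ), 0) ∈ q.1}
  delta g qs := {q | q.1 = E.FatherD g ∧ ∃ fs : Fin (rank g) → σ,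
    (∀ i, (qs i).1 = E.FatherD (fs i)) ∧ ∀ i, (g, (i : ℕ)) ∈ E.Father (fs i)}

/-- The compressed Father automaton of an expression `E`. -/
def cFatherTA {σ : Type} {rank : σ → ℕ} (E : RExp σ rank) : CTA σ rank (FQ E) where
  final := {q | ((none : Option σ), 0) ∈ q.1}
  delta f Qs := {q | q.1 = E.FatherD f ∧
    ∀ i : Fin (rank f), Qs i = {p : FQ E | ((some f : Option σ), (i : ℕ)) ∈ p.1}}

/-- The Father congruence: two symbols are equivalent when they have the same
fathers in `$(E)`. -/
def fatherSetoid {σ : Type} {rank : σ → ℕ} (E : RExp σ rank) : Setoid σ where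
  r p p' := E.FatherD p = E.FatherD p'
  iseqv := { refl := fun _ => rfl, symm := Eq.symm, trans := Eq.trans }

/-! The transition of `posTA E` at `g(t₁, …, tₙ)` can only enter state `g` and checks exactly
the `n` edges leaving the root against `Father E`; so by structural induction `Δ(t)` is
`{root t}` when every edge of `t` passes this check, and empty otherwise. -/

theorem RTree.sub_node_iff {σ : Type} {rank : σ → ℕ} {s : RTree σ rank} {g : σ}
    {ts : Fin (rank g) → RTree σ rank} :
    RTree.Sub s (.node g ts) ↔ s = .node g ts ∨ ∃ i, RTree.Sub s (ts i) := by
  constructor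
  · rintro (_ | ⟨i, hsub⟩)
    exacts [.inl rfl, .inr ⟨i, hsub⟩]
  · rintro (rfl | ⟨i, hsub⟩)
    exacts [.refl _, .child i hsub]

namespace RExp

variable {σ : Type} {rank : σ → ℕ}

def FatherAdmissible (E : RExp σ rank) (t : RTree σ rank) : Prop :=
  ∀ (g : σ) (ss : Fin (rank g) → RTree σ rank),
    RTree.Sub (RTree.node g ss) t → ∀ i : Fin (rank g), (g, (i : ℕ)) ∈ E.Father (ss i).root

theorem fatherAdmissible_node_iff (E : RExp σ rank) {g : σ} {ts : Fin (rank g) → RTree σ rank} :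
    E.FatherAdmissible (.node g ts) ↔
      (∀ i : Fin (rank g), (g, (i : ℕ)) ∈ E.Father (ts i).root) ∧
        ∀ i, E.FatherAdmissible (ts i) := by
  simp only [FatherAdmissible, RTree.sub_node_iff]
  constructor
  · intro h
    exact ⟨h g ts (.inl rfl), fun i g' ss hsub => h g' ss (.inr ⟨i, hsub⟩)⟩
  · rintro ⟨hroot, hchildren⟩ g' ss (heq | ⟨i, hsub⟩)
    · cases heq
      exact hroot
    · exact hchildren i g' ss hsub

end RExp

theorem mem_posTA_Delta_iff {σ : Type} {rank : σ → ℕ} (E : RExp σ rank) (t : RTree σ rank)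
    (f : σ) : f ∈ (posTA E).Delta t ↔ t.root = f ∧ E.FatherAdmissible t := by
  induction t generalizing f with
  | node g ts ih =>
    rw [E.fatherAdmissible_node_iff]
    constructor
    · rintro ⟨qs, hqs, rfl, hfather⟩
      have hchild i := (ih i (qs i)).mp (hqs i)
      refine ⟨rfl, fun i => ?_, fun i => (hchild i).2⟩
      rw [(hchild i).1]
      exact hfather i
    · rintro ⟨rfl, hroot, hchildren⟩
      exact ⟨fun i => (ts i).root, fun i => (ih i _).mpr ⟨rfl, hchildren i⟩, rfl, hroot⟩

theorem stmt7_general {σ : Type} {rank : σ → ℕ}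
    (E : RExp σ rank) (t : RTree σ rank) (f : σ) :
    f ∈ (posTA E).Delta t ↔
      t.root = f ∧
        ∀ (g : σ) (ss : Fin (rank g) → RTree σ rank),
          RTree.Sub (RTree.node g ss) t →
            ∀ i : Fin (rank g), (g, (i : ℕ)) ∈ E.Father (ss i).root :=
  mem_posTA_Delta_iff E t f

/-- In the Bottom-Up Position automaton of a linear expression `E`,
for `f ∈ Pos(E)`, `f ∈ Δ(t)` iff `root(t) = f` and `P(t)` holds. -/
theorem stmt7 {σ : Type} [DecidableEq σ] {rank : σ → ℕ}
    (E : RExp σ rank) (hE : E.Linear) (t : RTree σ rank) (f : σ) (hf : f ∈ E.Pos) :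
    f ∈ (posTA E).Delta t ↔
      t.root = f ∧
        ∀ (g : σ) (ss : Fin (rank g) → RTree σ rank),
          RTree.Sub (RTree.node g ss) t →
            ∀ i : Fin (rank g), (g, (i : ℕ)) ∈ E.Father (ss i).root :=
  stmt7_general E t f
end

section
/- Quotienting a deterministic tree automaton by a Bottom-Up congruence preserves the recognized language: L(A_∼) = L(A). -/
set_option autoImplicit false

/-!
Mapping every state of a run of `A` to its class gives a run of `A_∼`. Conversely, a transition
of `A_∼` is a transition of `A` between arbitrary representatives of the classes; since the
congruence relates the targets of transitions whose sources differ in one argument, changing the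
representatives one argument at a time shows that every class reached by `A_∼` on a tree contains
a state reached by `A` on it. Final states are unions of classes, so both languages agree.
-/

open Function Relation

theorem Relation.ReflTransGen.of_forall_update {ι α β : Type*} [DecidableEq ι] [Fintype ι]
    {r : α → α → Prop} {R : β → β → Prop} {F : (ι → α) → β}
    (hF : ∀ x i a a', r a a' → R (F (update x i a)) (F (update x i a')))
    {x y : ι → α} (h : ∀ i, r (x i) (y i)) : ReflTransGen R (F x) (F y) := by
  suffices ∀ T : Finset ι, ReflTransGen R (F x) (F (T.piecewise y x)) by
    simpa using this Finset.univ
  intro T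
  induction T using Finset.induction with
  | empty => simpa using ReflTransGen.refl
  | insert j T hj ih =>
    refine ih.tail ?_
    have hupd : T.piecewise y x = update (T.piecewise y x) j (x j) := by
      rw [← Finset.piecewise_eq_of_notMem T y x hj, update_eq_self]
    rw [Finset.piecewise_insert, hupd, update_idem]
    exact hF _ j _ _ (h j)

theorem SetEquiv.equivalence {Q : Type} {r : Q → Q → Prop} (hr : Equivalence r) :
    Equivalence (SetEquiv r) where
  refl S := ⟨fun q hq => ⟨q, hq, hr.refl q⟩, fun q hq => ⟨q, hq, hr.refl q⟩⟩
  symm h := ⟨fun q hq => (h.2 q hq).imp fun _ ⟨hq', hr'⟩ => ⟨hq', hr.symm hr'⟩,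
    fun q hq => (h.1 q hq).imp fun _ ⟨hq', hr'⟩ => ⟨hq', hr.symm hr'⟩⟩
  trans {S T U} hST hTU := by
    constructor
    · intro q hq
      obtain ⟨q', hq', hqq'⟩ := hST.1 q hq
      obtain ⟨q'', hq'', hq'q''⟩ := hTU.1 q' hq'
      exact ⟨q'', hq'', hr.trans hqq' hq'q''⟩
    · intro q hq
      obtain ⟨q', hq', hq'q⟩ := hTU.2 q hq
      obtain ⟨q'', hq'', hq''q'⟩ := hST.2 q' hq'
      exact ⟨q'', hq'', hr.trans hq''q' hq'q⟩

namespace TA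

variable {σ : Type} {rank : σ → ℕ} {Q : Type} {A : TA σ rank Q} {s : Setoid Q}

def DeltaRespects (A : TA σ rank Q) (s : Setoid Q) : Prop :=
  ∀ p p' : Q, s.r p p' → ∀ (f : σ) (n : Fin (rank f)) (qs : Fin (rank f) → Q),
    SetEquiv s.r (A.delta f (update qs n p)) (A.delta f (update qs n p'))

theorem delta_setEquiv_of_rel (hcong : A.DeltaRespects s) {f : σ} {qs qs' : Fin (rank f) → Q}
    (h : ∀ i, s.r (qs i) (qs' i)) :
    SetEquiv s.r (A.delta f qs) (A.delta f qs') := by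
  have hE := SetEquiv.equivalence s.iseqv
  have hchain := ReflTransGen.of_forall_update (F := A.delta f)
    (fun x i a a' ha => hcong a a' ha f i x) h
  generalize A.delta f qs' = S at hchain ⊢
  induction hchain with
  | refl => exact hE.refl _
  | tail _ hstep ih => exact hE.trans ih hstep

theorem mk_mem_Delta_quot {t : RTree σ rank} {q : Q} (hq : q ∈ A.Delta t) :
    Quotient.mk s q ∈ (A.quot s).Delta t := by
  induction t generalizing q with
  | node f ts ih =>
    obtain ⟨qs, hqs, hq⟩ := hq
    exact ⟨fun i => Quotient.mk s (qs i), fun i => ih i (hqs i), qs, q, fun _ => rfl, hq, rfl⟩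

theorem exists_mem_Delta_of_mem_Delta_quot (hcong : A.DeltaRespects s) {t : RTree σ rank}
    {x : Quotient s} (hx : x ∈ (A.quot s).Delta t) :
    ∃ q ∈ A.Delta t, Quotient.mk s q = x := by
  induction t generalizing x with
  | node f ts ih =>
    obtain ⟨xs, hxs, qs, q, hqs, hq, rfl⟩ := hx
    choose runs hruns hmk using fun i => ih i (hxs i)
    have hrel : ∀ i, s.r (qs i) (runs i) := fun i => Quotient.exact ((hqs i).trans (hmk i).symm)
    obtain ⟨q', hq', hqq'⟩ := (delta_setEquiv_of_rel hcong hrel).1 q hq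
    exact ⟨q', ⟨runs, hruns, hq'⟩, Quotient.sound (s.symm hqq')⟩

theorem lang_quot (hfin : ∀ p p' : Q, s.r p p' → (p ∈ A.final ↔ p' ∈ A.final))
    (hcong : A.DeltaRespects s) : (A.quot s).lang = A.lang := by
  ext t
  constructor
  · rintro ⟨x, hx, q₀, hq₀x, hq₀⟩
    obtain ⟨q, hq, rfl⟩ := exists_mem_Delta_of_mem_Delta_quot hcong hx
    exact ⟨q, hq, (hfin q q₀ (Quotient.exact hq₀x.symm)).2 hq₀⟩
  · rintro ⟨q, hq, hqfin⟩
    exact ⟨Quotient.mk s q, mk_mem_Delta_quot hq, q, rfl, hqfin⟩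

end TA

theorem stmt14_general {σ : Type} {rank : σ → ℕ} {Q : Type}
    (A : TA σ rank Q) (s : Setoid Q)
    (hfin : ∀ p p' : Q, s.r p p' → (p ∈ A.final ↔ p' ∈ A.final))
    (hcong : ∀ p p' : Q, s.r p p' ↔
      ∀ (f : σ) (n : Fin (rank f)) (qs : Fin (rank f) → Q),
        SetEquiv s.r (A.delta f (Function.update qs n p))
          (A.delta f (Function.update qs n p'))) :
    (A.quot s).lang = A.lang :=
  TA.lang_quot hfin fun p p' => (hcong p p').1

/-- Quotienting a deterministic tree automaton by a Bottom-Up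
congruence preserves the recognized language. -/
theorem stmt14 {σ : Type} {rank : σ → ℕ} {Q : Type}
    (A : TA σ rank Q) (s : Setoid Q)
    (hdet : ∀ (f : σ) (qs : Fin (rank f) → Q), (A.delta f qs).Subsingleton)
    (hfin : ∀ p p' : Q, s.r p p' → (p ∈ A.final ↔ p' ∈ A.final))
    (hcong : ∀ p p' : Q, s.r p p' ↔
      ∀ (f : σ) (n : Fin (rank f)) (qs : Fin (rank f) → Q),
        SetEquiv s.r (A.delta f (Function.update qs n p))
          (A.delta f (Function.update qs n p'))) :
    (A.quot s).lang = A.lang :=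
  stmt14_general A s hfin hcong
end
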